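/- For every real n > 0 and every s ∈ ℝ, one has (n+2) f_{n+2}(s) + s > 0 and the recursion f_n(s) = 1 / ((n+2) f_{n+2}(s) + s) holds. -/

import Mathlib

/-!
Integrating the derivative of `x ^ n * exp (-x⁴/4 - s x²/2)` over `(0, ∞)` gives the identity
`n I_{n-1} = I_{n+3} + s I_{n+1}`: the boundary term vanishes at `0` because `n > 0` and at `∞`
because of the quartic decay. Since all `I_k` are positive, dividing by `I_{n+1}` shows that
`(n+2) f_{n+2} + s = n I_{n-1} / I_{n+1}`, which is positive and is the reciprocal of `f_n`.
-/

open MeasureTheory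

/-- `I k s = ∫₀^∞ x^k e^{-x⁴/4 - s x²/2} dx`. -/
noncomputable def I (k s : ℝ) : ℝ :=
  ∫ x in Set.Ioi (0 : ℝ), x ^ k * Real.exp (-x ^ 4 / 4 - s * x ^ 2 / 2)

/-- The universal profile `f n s = I (n+1) s / (n · I (n-1) s)`. -/
noncomputable def f (n s : ℝ) : ℝ := I (n + 1) s / (n * I (n - 1) s)

open Set Filter Topology Real

noncomputable def integrand (k s x : ℝ) : ℝ := x ^ k * exp (-x ^ 4 / 4 - s * x ^ 2 / 2)

lemma I_eq_integral_integrand (k s : ℝ) : I k s = ∫ x in Ioi 0, integrand k s x := rfl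

lemma exponent_le (s x : ℝ) : -x ^ 4 / 4 - s * x ^ 2 / 2 ≤ s ^ 2 / 2 + -(1 / 8) * x ^ 4 := by
  nlinarith [sq_nonneg (x ^ 2 + 2 * s)]

lemma integrand_le {k s x : ℝ} (hx : 0 < x) :
    integrand k s x ≤ exp (s ^ 2 / 2) * (x ^ k * exp (-(1 / 8) * x ^ 4)) := by
  rw [integrand, mul_left_comm, ← exp_add]
  gcongr
  exact exponent_le s x

lemma integrand_pos {k s x : ℝ} (hx : 0 < x) : 0 < integrand k s x :=
  mul_pos (rpow_pos_of_pos hx k) (exp_pos _)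

lemma continuousOn_integrand (k s : ℝ) : ContinuousOn (integrand k s) (Ioi 0) :=
  (continuousOn_id.rpow_const fun _ hx => Or.inl (ne_of_gt hx)).mul (by fun_prop)

lemma integrableOn_integrand {k : ℝ} (hk : -1 < k) (s : ℝ) :
    IntegrableOn (integrand k s) (Ioi 0) := by
  have hdom : IntegrableOn (fun x : ℝ => exp (s ^ 2 / 2) * (x ^ k * exp (-(1 / 8) * x ^ (4 : ℝ))))
      (Ioi 0) :=
    (integrableOn_rpow_mul_exp_neg_mul_rpow hk (by norm_num) (by norm_num)).const_mul _
  refine hdom.mono' ((continuousOn_integrand k s).aestronglyMeasurable measurableSet_Ioi) ?_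
  filter_upwards [ae_restrict_mem measurableSet_Ioi] with x hx
  rw [norm_of_nonneg (integrand_pos hx).le, rpow_ofNat]
  exact integrand_le hx

lemma I_pos {k : ℝ} (hk : -1 < k) (s : ℝ) : 0 < I k s := by
  rw [I_eq_integral_integrand, setIntegral_pos_iff_support_of_nonneg_ae
    (ae_restrict_of_forall_mem measurableSet_Ioi fun _ hx => (integrand_pos hx).le)
    (integrableOn_integrand hk s)]
  have hsupp : Ioi 0 ⊆ Function.support (integrand k s) ∩ Ioi 0 :=
    fun x hx => ⟨(integrand_pos hx).ne', hx⟩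
  refine lt_of_lt_of_le ?_ (measure_mono hsupp)
  simp

lemma tendsto_integrand_atTop (k s : ℝ) : Tendsto (integrand k s) atTop (𝓝 0) := by
  have hdom : Tendsto (fun x : ℝ => exp (s ^ 2 / 2) * ((x ^ 4) ^ (k / 4) * exp (-(1 / 8) * x ^ 4)))
      atTop (𝓝 0) := by
    simpa using ((tendsto_rpow_mul_exp_neg_mul_atTop_nhds_zero (k / 4) (1 / 8) (by norm_num)).comp
      (tendsto_pow_atTop (by norm_num : 4 ≠ 0))).const_mul (exp (s ^ 2 / 2))
  refine squeeze_zero' (eventually_of_mem (Ioi_mem_atTop 0) fun _ hx => (integrand_pos hx).le)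
    ?_ hdom
  filter_upwards [Ioi_mem_atTop 0] with x hx
  have hpow : (x ^ 4) ^ (k / 4) = x ^ k := by
    rw [← rpow_natCast, ← rpow_mul hx.le]
    ring_nf
  rw [hpow]
  exact integrand_le hx

lemma hasDerivAt_integrand (n s : ℝ) {x : ℝ} (hx : 0 < x) :
    HasDerivAt (integrand n s)
      (n * integrand (n - 1) s x - integrand (n + 3) s x - s * integrand (n + 1) s x) x := by
  have hexp := (((hasDerivAt_pow 4 x).neg.div_const 4).sub
    (((hasDerivAt_pow 2 x).const_mul s).div_const 2)).exp
  have hprod : HasDerivAt (integrand n s) _ x :=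
    (hasDerivAt_rpow_const (p := n) (Or.inl hx.ne')).mul hexp
  convert hprod using 1
  simp only [integrand, rpow_add hx, rpow_one, rpow_ofNat, Pi.sub_apply, Pi.neg_apply]
  push_cast
  ring

lemma mul_I_sub_one_eq {n : ℝ} (hn : 0 < n) (s : ℝ) :
    n * I (n - 1) s = I (n + 3) s + s * I (n + 1) s := by
  have hm1 := (integrableOn_integrand (k := n - 1) (by linarith) s).const_mul n
  have hp3 := integrableOn_integrand (k := n + 3) (by linarith) s
  have hp1 := (integrableOn_integrand (k := n + 1) (by linarith) s).const_mul s
  have hcont : ContinuousWithinAt (integrand n s) (Ici 0) 0 :=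
    (continuousWithinAt_id.rpow_const (Or.inr hn.le)).mul (by fun_prop)
  have hboundary : integrand n s 0 = 0 := by simp [integrand, zero_rpow hn.ne']
  have hzero := integral_Ioi_of_hasDerivAt_of_tendsto hcont
    (fun x hx => hasDerivAt_integrand n s hx) ((hm1.sub hp3).sub hp1)
    (tendsto_integrand_atTop n s)
  rw [integral_sub _ hp1, integral_sub hm1 hp3, integral_const_mul,
    integral_const_mul] at hzero
  · simp only [I_eq_integral_integrand]
    linarith
  · exact hm1.sub hp3

lemma add_two_mul_f_add_two_add {n : ℝ} (hn : 0 < n) (s : ℝ) :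
    (n + 2) * f (n + 2) s + s = n * I (n - 1) s / I (n + 1) s := by
  have hI : I (n + 1) s ≠ 0 := (I_pos (by linarith) s).ne'
  rw [f, show n + 2 + 1 = n + 3 by ring, show n + 2 - 1 = n + 1 by ring, mul_I_sub_one_eq hn s]
  field_simp

/-- The recursion `f_n(s) = 1 / ((n+2) f_{n+2}(s) + s)`, with positive denominator. -/
theorem universal_profile_recursion (n : ℝ) (hn : 0 < n) (s : ℝ) :
    0 < (n + 2) * f (n + 2) s + s ∧ f n s = 1 / ((n + 2) * f (n + 2) s + s) := by
  rw [add_two_mul_f_add_two_add hn s, one_div_div]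
  exact ⟨div_pos (mul_pos hn (I_pos (by linarith) s)) (I_pos (by linarith) s), rfl⟩
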